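/- Let f : ℝⁿ → ℝ be L-smooth with lower bound f⋆, let t_k ∈ (0, √3/L) for k = 1,…,N, and let x^{k+1} = x^k - t_k∇f(x^k) with f(x¹) - f⋆ ≤ Δ. Then min_{1≤k≤N+1} ‖∇f(x^k)‖ ≤ ( 4Δ / ( Σ_{k=1}^N min(-L²t_k³ + 4t_k, -Lt_k² + 4t_k) + 2/L ) )^{1/2}. -/

import Mathlib

/-!
By `L`-smoothness, `f` lies between the quadratic models `f x + ⟪∇f x, v⟫ ± L/2 ‖v‖²` around every
point. Evaluating the upper model at `x` and the lower model at `y` at their best common point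
gives the interpolation inequality
`f y ≤ f x + ⟪∇f x + ∇f y, y - x⟫ / 2 + L/4 ‖y - x‖² - ‖∇f y - ∇f x‖² / (4L)`.
For a gradient step `y = x - t ∇f x` with `L t < √3` it yields
`descentCoeff L t * min ‖∇f x‖² ‖∇f y‖² ≤ 4 (f x - f y)`, the two entries of the minimum in
`descentCoeff` covering the regimes `L t ≤ 1` and `L t ≥ 1`. Summing over the steps, and adding
`‖∇f x^{N+1}‖² ≤ 2L (f x^{N+1} - f⋆)` (one more step of length `1/L`), bounds
`(∑ descentCoeff L t_k + 2/L) * min_k ‖∇f x^k‖²` by `4Δ`.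
-/

open RealInnerProductSpace

def descentCoeff (L t : ℝ) : ℝ :=
  min (-L ^ 2 * t ^ 3 + 4 * t) (-L * t ^ 2 + 4 * t)

theorem descentCoeff_nonneg {L t : ℝ} (ht : 0 < t) (hLt : L ^ 2 * t ^ 2 ≤ 3) :
    0 ≤ descentCoeff L t := by
  have h2 : L * t ≤ 2 := by nlinarith
  exact le_min (by nlinarith) (by nlinarith)

-- With `g = ∇f x`, `u = ∇f y - ∇f x`, `D = ‖g‖²`, `P = ⟪g, u⟫`, `U = ‖u‖²`, the hypothesis `hK` is
-- the interpolation inequality for `y = x - t g`, and `D + 2 P + U = ‖∇f y‖²`.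
theorem descentCoeff_mul_min_le {L t D P U δ : ℝ} (hL : 0 < L) (ht : 0 < t)
    (hLt : L ^ 2 * t ^ 2 ≤ 3) (hU : 0 ≤ U) (hUD : U ≤ L ^ 2 * t ^ 2 * D)
    (hK : 4 * L * t * D + 2 * L * t * P - L ^ 2 * t ^ 2 * D + U ≤ 4 * L * δ) :
    descentCoeff L t * min D (D + 2 * P + U) ≤ 4 * δ := by
  have hLt0 : 0 < L * t := mul_pos hL ht
  have hLt2 : 0 ≤ L * t ^ 2 := mul_nonneg hL.le (sq_nonneg t)
  refine le_of_mul_le_mul_left ?_ hL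
  rcases le_total (L * t) 1 with hsmall | hlarge
  · rw [descentCoeff, min_eq_right (by nlinarith [mul_nonneg hLt2 (sub_nonneg.2 hsmall)])]
    rcases le_total (2 * P + U) 0 with hneg | hpos
    · rw [min_eq_right (by linarith)]
      nlinarith [mul_nonneg hU (sub_nonneg.2 hsmall),
        mul_nonneg hLt0.le (mul_nonneg (by linarith : (0 : ℝ) ≤ 3 - L * t) (neg_nonneg.2 hneg))]
    · rw [min_eq_left (by linarith)]
      nlinarith [mul_nonneg hLt0.le hpos, mul_nonneg hU (sub_nonneg.2 hsmall)]
  · rw [descentCoeff, min_eq_left (by nlinarith [mul_nonneg hLt2 (sub_nonneg.2 hlarge)])]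
    rcases le_total (2 * P + U) 0 with hneg | hpos
    · rw [min_eq_right (by linarith)]
      nlinarith [mul_nonneg hLt0.le (mul_nonneg (sub_nonneg.2 hLt) (neg_nonneg.2 hneg)),
        mul_nonneg (sub_nonneg.2 hlarge) (sub_nonneg.2 hUD)]
    · rw [min_eq_left (by linarith)]
      nlinarith [mul_nonneg hLt0.le hpos, mul_nonneg (sub_nonneg.2 hlarge) (sub_nonneg.2 hUD)]

theorem sq_mul_sq_le_three_of_mem_Ioo {L t : ℝ} (hL : 0 < L)
    (ht : t ∈ Set.Ioo 0 (Real.sqrt 3 / L)) : L ^ 2 * t ^ 2 ≤ 3 := by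
  have h : L * t < Real.sqrt 3 := by rw [mul_comm, ← lt_div_iff₀ hL]; exact ht.2
  rw [← mul_pow]
  exact ((Real.lt_sqrt (mul_pos hL ht.1).le).1 h).le

theorem Finset.sum_Icc_sub_succ {M : Type*} [AddCommGroup M] (G : ℕ → M) (N : ℕ) :
    ∑ k ∈ Icc 1 N, (G k - G (k + 1)) = G 1 - G (N + 1) := by
  rw [← Ico_add_one_right_eq_Icc, ← neg_sub, ← sum_Ico_sub G (by omega), ← sum_neg_distrib]
  simp only [neg_sub]

section Smooth

variable {F : Type*} [NormedAddCommGroup F] [InnerProductSpace ℝ F] [CompleteSpace F]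
  {f : F → ℝ} {L : ℝ}

theorem hasDerivAt_comp_add_smul {x v : F} {s : ℝ} (hf : DifferentiableAt ℝ f (x + s • v)) :
    HasDerivAt (fun s : ℝ => f (x + s • v)) ⟪gradient f (x + s • v), v⟫ s := by
  have hline : HasDerivAt (fun s : ℝ => x + s • v) v s := by
    simpa using ((hasDerivAt_id s).smul_const v).const_add x
  simpa [Function.comp_def] using hf.hasGradientAt.hasFDerivAt.comp_hasDerivAt s hline

theorem abs_sub_sub_inner_gradient_le (hf : Differentiable ℝ f)
    (hlip : ∀ x y, ‖gradient f x - gradient f y‖ ≤ L * ‖x - y‖) (x v : F) :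
    |f (x + v) - f x - ⟪gradient f x, v⟫| ≤ L / 2 * ‖v‖ ^ 2 := by
  set φ : ℝ → ℝ := fun s => f (x + s • v) - f x - s * ⟪gradient f x, v⟫
  have hφ : ∀ s, HasDerivAt φ ⟪gradient f (x + s • v) - gradient f x, v⟫ s := fun s => by
    rw [inner_sub_left]
    exact ((hasDerivAt_comp_add_smul (hf _)).sub_const _).sub
      ((hasDerivAt_id s).mul_const _ |>.congr_deriv (one_mul _))
  have hB : ∀ s, HasDerivAt (fun s : ℝ => L / 2 * s ^ 2 * ‖v‖ ^ 2) (L * s * ‖v‖ ^ 2) s :=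
    fun s => (((hasDerivAt_pow 2 s).const_mul (L / 2)).mul_const _).congr_deriv
      (by push_cast; ring)
  have hbound : ∀ s ∈ Set.Ico (0 : ℝ) 1,
      ‖⟪gradient f (x + s • v) - gradient f x, v⟫‖ ≤ L * s * ‖v‖ ^ 2 := fun s hs =>
    calc ‖⟪gradient f (x + s • v) - gradient f x, v⟫‖
        ≤ ‖gradient f (x + s • v) - gradient f x‖ * ‖v‖ := norm_inner_le_norm _ _
      _ ≤ L * (s * ‖v‖) * ‖v‖ := by
          gcongr
          simpa [norm_smul, abs_of_nonneg hs.1] using hlip (x + s • v) x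
      _ = L * s * ‖v‖ ^ 2 := by ring
  simpa [φ] using image_norm_le_of_norm_deriv_right_le_deriv_boundary (a := 0) (b := 1)
    (fun s _ => (hφ s).continuousAt.continuousWithinAt) (fun s _ => (hφ s).hasDerivWithinAt)
    (by simp [φ]) hB hbound (Set.right_mem_Icc.2 zero_le_one)

theorem norm_gradient_sq_le (hL : 0 < L) (hf : Differentiable ℝ f)
    (hlip : ∀ x y, ‖gradient f x - gradient f y‖ ≤ L * ‖x - y‖) {m : ℝ} (hlow : ∀ y, m ≤ f y)
    (z : F) : ‖gradient f z‖ ^ 2 ≤ 2 * L * (f z - m) := by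
  have hdesc := (abs_le.1 (abs_sub_sub_inner_gradient_le hf hlip z (-L⁻¹ • gradient f z))).2
  rw [inner_smul_right, real_inner_self_eq_norm_sq, norm_smul, mul_pow, norm_neg, norm_inv,
    Real.norm_of_nonneg hL.le] at hdesc
  have hm := hlow (z + -L⁻¹ • gradient f z)
  have hcoef : L / 2 * ((L⁻¹) ^ 2 * ‖gradient f z‖ ^ 2) - L⁻¹ * ‖gradient f z‖ ^ 2
      = -(‖gradient f z‖ ^ 2 / (2 * L)) := by
    field_simp; ring
  have key : ‖gradient f z‖ ^ 2 / (2 * L) ≤ f z - m := by linarith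
  rwa [div_le_iff₀ (by positivity), mul_comm] at key

theorem le_add_inner_gradient_add_sub (hL : 0 < L) (hf : Differentiable ℝ f)
    (hlip : ∀ x y, ‖gradient f x - gradient f y‖ ≤ L * ‖x - y‖) (x y : F) :
    f y ≤ f x + ⟪gradient f x + gradient f y, y - x⟫ / 2 + L / 4 * ‖y - x‖ ^ 2
      - ‖gradient f y - gradient f x‖ ^ 2 / (4 * L) := by
  set g := gradient f x
  set d := y - x
  set u := gradient f y - g
  have hh : gradient f y = g + u := by simp [u]
  -- `x + v₁ = y + v₂` minimizes the sum of the upper model at `x` and minus the lower model at `y`.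
  set v₁ : F := (1 / 2 : ℝ) • d + (2 * L)⁻¹ • u
  set v₂ : F := (-1 / 2 : ℝ) • d + (2 * L)⁻¹ • u
  have hw : y + v₂ = x + v₁ := by simp only [v₁, v₂, d]; module
  have upper := (abs_le.1 (abs_sub_sub_inner_gradient_le hf hlip x v₁)).2
  have lower := (abs_le.1 (abs_sub_sub_inner_gradient_le hf hlip y v₂)).1
  rw [hw] at lower
  have hid : ⟪g, v₁⟫ - ⟪gradient f y, v₂⟫ + L / 2 * ‖v₁‖ ^ 2 + L / 2 * ‖v₂‖ ^ 2
      = ⟪g + gradient f y, d⟫ / 2 + L / 4 * ‖d‖ ^ 2 - ‖u‖ ^ 2 / (4 * L) := by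
    simp only [hh, v₁, v₂, ← real_inner_self_eq_norm_sq, inner_add_left, inner_add_right,
      real_inner_smul_left, real_inner_smul_right, real_inner_comm d u]
    field_simp
    ring
  linarith

theorem descentCoeff_mul_min_le_sub (hL : 0 < L) (hf : Differentiable ℝ f)
    (hlip : ∀ x y, ‖gradient f x - gradient f y‖ ≤ L * ‖x - y‖) (x : F) {t : ℝ} (ht : 0 < t)
    (hLt : L ^ 2 * t ^ 2 ≤ 3) :
    descentCoeff L t * min (‖gradient f x‖ ^ 2) (‖gradient f (x - t • gradient f x)‖ ^ 2)
      ≤ 4 * (f x - f (x - t • gradient f x)) := by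
  set g := gradient f x
  set y := x - t • g
  set u := gradient f y - g
  have hyx : y - x = -(t • g) := by simp [y]
  have hgrad_y : gradient f y = g + u := by simp [u]
  have hnorm_y : ‖gradient f y‖ ^ 2 = ‖g‖ ^ 2 + 2 * ⟪g, u⟫ + ‖u‖ ^ 2 := by
    rw [hgrad_y, norm_add_sq_real]
  have hu : ‖u‖ ≤ L * t * ‖g‖ := by
    simpa [hyx, norm_smul, abs_of_pos ht, mul_assoc] using hlip y x
  have hinterp : f y ≤ f x + ⟪g + gradient f y, y - x⟫ / 2 + L / 4 * ‖y - x‖ ^ 2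
      - ‖u‖ ^ 2 / (4 * L) := le_add_inner_gradient_add_sub hL hf hlip x y
  rw [hyx, hgrad_y, norm_neg, norm_smul, Real.norm_of_nonneg ht.le, inner_neg_right,
    inner_smul_right, inner_add_left, inner_add_left, real_inner_self_eq_norm_sq,
    real_inner_comm g u] at hinterp
  rw [hnorm_y]
  refine descentCoeff_mul_min_le hL ht hLt (sq_nonneg _) ?_ ?_
  · calc ‖u‖ ^ 2 ≤ (L * t * ‖g‖) ^ 2 := pow_le_pow_left₀ (norm_nonneg u) hu 2
      _ = L ^ 2 * t ^ 2 * ‖g‖ ^ 2 := by ring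
  · have hdiv : ‖u‖ ^ 2 / (4 * L) * (4 * L) = ‖u‖ ^ 2 := div_mul_cancel₀ _ (by positivity)
    nlinarith

end Smooth

theorem stmt_7_general {n : ℕ} (f : EuclideanSpace ℝ (Fin n) → ℝ) (L : ℝ) (hL : 0 < L)
    (hf : Differentiable ℝ f)
    (hlip : ∀ x y, ‖gradient f x - gradient f y‖ ≤ L * ‖x - y‖)
    (fstar : ℝ) (hlow : ∀ y, fstar ≤ f y)
    (Δ : ℝ) (N : ℕ)
    (t : ℕ → ℝ) (ht : ∀ k, 1 ≤ k → k ≤ N → t k ∈ Set.Ioo 0 (Real.sqrt 3 / L))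
    (x : ℕ → EuclideanSpace ℝ (Fin n))
    (hinit : f (x 1) - fstar ≤ Δ)
    (hupd : ∀ k, 1 ≤ k → k ≤ N → x (k + 1) = x k - t k • gradient f (x k)) :
    ∃ k ∈ Finset.Icc 1 (N + 1),
      ‖gradient f (x k)‖ ≤
        Real.sqrt (4 * Δ /
          (∑ k ∈ Finset.Icc 1 N,
              min (-L ^ 2 * t k ^ 3 + 4 * t k) (-L * t k ^ 2 + 4 * t k) + 2 / L)) := by
  obtain ⟨k₀, hk₀, hmin⟩ := Finset.exists_min_image (Finset.Icc 1 (N + 1))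
    (fun k => ‖gradient f (x k)‖) ⟨1, by simp⟩
  refine ⟨k₀, hk₀, ?_⟩
  set M := ‖gradient f (x k₀)‖
  set S := ∑ k ∈ Finset.Icc 1 N, descentCoeff L (t k)
  have hM : ∀ k, 1 ≤ k → k ≤ N + 1 → M ^ 2 ≤ ‖gradient f (x k)‖ ^ 2 := fun k h₁ h₂ =>
    pow_le_pow_left₀ (norm_nonneg _) (hmin k (Finset.mem_Icc.2 ⟨h₁, h₂⟩)) 2
  have hsize : ∀ k ∈ Finset.Icc 1 N, 0 < t k ∧ L ^ 2 * t k ^ 2 ≤ 3 := fun k hk => by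
    obtain ⟨h₁, h₂⟩ := Finset.mem_Icc.1 hk
    exact ⟨(ht k h₁ h₂).1, sq_mul_sq_le_three_of_mem_Ioo hL (ht k h₁ h₂)⟩
  have hdecrease : ∀ k ∈ Finset.Icc 1 N,
      descentCoeff L (t k) * M ^ 2 ≤ 4 * (f (x k) - f (x (k + 1))) := by
    intro k hk
    obtain ⟨h₁, h₂⟩ := Finset.mem_Icc.1 hk
    obtain ⟨htk, hLt⟩ := hsize k hk
    have hstep := descentCoeff_mul_min_le_sub hL hf hlip (x k) htk hLt
    rw [← hupd k h₁ h₂] at hstep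
    refine (mul_le_mul_of_nonneg_left ?_ (descentCoeff_nonneg htk hLt)).trans hstep
    exact le_min (hM k h₁ (by omega)) (hM (k + 1) (by omega) (by omega))
  have hsum : S * M ^ 2 ≤ 4 * (f (x 1) - f (x (N + 1))) := by
    rw [Finset.sum_mul, ← Finset.sum_Icc_sub_succ (fun k => f (x k)), Finset.mul_sum]
    exact Finset.sum_le_sum hdecrease
  have htail : 2 / L * M ^ 2 ≤ 4 * (f (x (N + 1)) - fstar) := by
    have := (hM (N + 1) (by omega) le_rfl).trans (norm_gradient_sq_le hL hf hlip hlow _)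
    rw [div_mul_eq_mul_div, div_le_iff₀ hL]
    linarith
  have hS : 0 ≤ S :=
    Finset.sum_nonneg fun k hk => descentCoeff_nonneg (hsize k hk).1 (hsize k hk).2
  change M ≤ Real.sqrt (4 * Δ / (S + 2 / L))
  refine Real.le_sqrt_of_sq_le ((le_div_iff₀ (by positivity)).2 ?_)
  linarith

theorem stmt_7 {n : ℕ} (f : EuclideanSpace ℝ (Fin n) → ℝ) (L : ℝ) (hL : 0 < L)
    (hf : Differentiable ℝ f)
    (hlip : ∀ x y, ‖gradient f x - gradient f y‖ ≤ L * ‖x - y‖)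
    (fstar : ℝ) (hlow : ∀ y, fstar ≤ f y)
    (Δ : ℝ) (hΔ : 0 < Δ) (N : ℕ) (hN : 1 ≤ N)
    (t : ℕ → ℝ) (ht : ∀ k, 1 ≤ k → k ≤ N → t k ∈ Set.Ioo 0 (Real.sqrt 3 / L))
    (x : ℕ → EuclideanSpace ℝ (Fin n))
    (hinit : f (x 1) - fstar ≤ Δ)
    (hupd : ∀ k, 1 ≤ k → k ≤ N → x (k + 1) = x k - t k • gradient f (x k)) :
    ∃ k ∈ Finset.Icc 1 (N + 1),
      ‖gradient f (x k)‖ ≤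
        Real.sqrt (4 * Δ /
          (∑ k ∈ Finset.Icc 1 N,
              min (-L ^ 2 * t k ^ 3 + 4 * t k) (-L * t k ^ 2 + 4 * t k) + 2 / L)) :=
  stmt_7_general f L hL hf hlip fstar hlow Δ N t ht x hinit hupd
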